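/- Let u ∈ H¹(ℝ^N), u ≠ 0, a > 0, and define φ(t,x) = (1−at)^{−N/2} e^{−i a|x|²/(4(1−at))} e^{i t/(1−at)} u(x/(1−at)) for 0 ≤ t < 1/a. Then (1−at)‖∇φ(t,·)‖_{L²} → ‖∇u‖_{L²} as t ↑ 1/a; in particular ‖∇φ(t,·)‖_{L²} → ∞ as t ↑ 1/a (assuming ∇u ≠ 0 and x u ∈ L²). -/

import Mathlib

/-
Up to a unimodular phase, `∇φ(t, x)` is `(1 - at)^{-N/2 - 1} (∇u(y) - i a (1 - at)/2 · y u(y))`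
at `y = x / (1 - at)`. The dilation `f ↦ l^{-N/2} f(· / l)` is an isometry of `L²`, so
`(1 - at) ‖∇φ(t)‖₂ = ‖∇u - i a (1 - at)/2 · x u‖₂`, which tends to `‖∇u‖₂` because `x u ∈ L²`.
Since `‖∇u‖₂ > 0`, the factor `(1 - at)⁻¹` then forces `‖∇φ(t)‖₂ → ∞`.
-/

open MeasureTheory Real Filter Set

noncomputable section

/-- The pseudoconformally transformed standing-wave profile
`φ(t,x) = (1−at)^{−N/2} e^{−ia|x|²/(4(1−at))} e^{it/(1−at)} u(x/(1−at))`. -/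
def selfSimilar (N : ℕ) (a : ℝ) (u : EuclideanSpace ℝ (Fin N) → ℂ)
    (t : ℝ) (x : EuclideanSpace ℝ (Fin N)) : ℂ :=
  (((1 - a * t) ^ (-(N : ℝ) / 2) : ℝ) : ℂ) *
    Complex.exp (-Complex.I * (a : ℂ) * ((‖x‖ ^ 2 : ℝ) : ℂ) / (4 * ((1 - a * t : ℝ) : ℂ))) *
    Complex.exp (Complex.I * ((t / (1 - a * t) : ℝ) : ℂ)) *
    u ((1 - a * t)⁻¹ • x)

open scoped ENNReal Topology

theorem tendsto_toReal_eLpNorm_sub_smul {α 𝕜 F : Type*} [MeasurableSpace α] {μ : Measure α}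
    [NormedField 𝕜] [NormedAddCommGroup F] [NormedSpace 𝕜 F] {p : ℝ≥0∞} [Fact (1 ≤ p)]
    {f g : α → F} (hf : MemLp f p μ) (hg : MemLp g p μ) :
    Tendsto (fun c : 𝕜 => (eLpNorm (f - c • g) p μ).toReal) (𝓝 0)
      (𝓝 (eLpNorm f p μ).toReal) := by
  have hLp : ∀ c : 𝕜, (eLpNorm (f - c • g) p μ).toReal = ‖hf.toLp f - c • hg.toLp g‖ := by
    intro c
    rw [← MemLp.toLp_const_smul, ← MemLp.toLp_sub, Lp.norm_toLp]
  simp_rw [hLp]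
  rw [← Lp.norm_toLp f hf]
  have : Continuous fun c : 𝕜 => ‖hf.toLp f - c • hg.toLp g‖ := by fun_prop
  simpa using this.tendsto 0

section Dilation

open Module

variable {E F : Type*} [NormedAddCommGroup E] [NormedSpace ℝ E] [MeasurableSpace E]
  [BorelSpace E] [FiniteDimensional ℝ E] (μ : Measure E) [μ.IsAddHaarMeasure]
  [NormedAddCommGroup F]

theorem eLpNorm_comp_smul {p : ℝ≥0∞} (hp : p ≠ ∞) (f : E → F) {r : ℝ} (hr : r ≠ 0) :
    eLpNorm (fun x => f (r • x)) p μ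
      = ENNReal.ofReal |r ^ finrank ℝ E|⁻¹ ^ (1 / p).toReal * eLpNorm f p μ := by
  rw [← Function.comp_def, ← (measurableEmbedding_const_smul₀ hr).eLpNorm_map_measure,
    Measure.map_addHaar_smul μ hr, eLpNorm_smul_measure_of_ne_top hp, abs_inv, smul_eq_mul]

theorem eLpNorm_two_rescale [NormedSpace ℝ F] (f : E → F) {l : ℝ} (hl : 0 < l) :
    eLpNorm (fun x => l ^ (-(finrank ℝ E : ℝ) / 2) • f (l⁻¹ • x)) 2 μ = eLpNorm f 2 μ := by
  have hd : (0 : ℝ) < l ^ finrank ℝ E := by positivity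
  rw [← Pi.smul_def, eLpNorm_const_smul, eLpNorm_comp_smul μ (by simp) f (inv_ne_zero hl.ne'),
    ← mul_assoc, Real.enorm_eq_ofReal (by positivity), inv_pow, abs_inv, inv_inv, abs_of_pos hd,
    ENNReal.ofReal_rpow_of_pos hd, ← ENNReal.ofReal_mul (by positivity)]
  convert one_mul (eLpNorm f 2 μ)
  rw [ENNReal.ofReal_eq_one, ← Real.rpow_natCast, ← Real.rpow_mul hl.le, ← Real.rpow_add hl]
  norm_num only [ENNReal.toReal_div, ENNReal.toReal_one, ENNReal.toReal_ofNat]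
  rw [show -(finrank ℝ E : ℝ) / 2 + finrank ℝ E * (1 / 2) = 0 by ring, Real.rpow_zero]

end Dilation

section MomentField

variable {E : Type*} [NormedAddCommGroup E] [InnerProductSpace ℝ E]

/-- The field `y ↦ y u(y)`, as the `ℂ`-valued linear form `v ↦ ⟪y, v⟫ u(y)`. -/
def momentField (u : E → ℂ) (y : E) : E →L[ℝ] ℂ :=
  (innerSL ℝ y).smulRight (u y)

theorem norm_momentField (u : E → ℂ) (y : E) : ‖momentField u y‖ = ‖y‖ * ‖u y‖ := by
  rw [momentField, ContinuousLinearMap.norm_smulRight_apply, innerSL_apply_norm]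

theorem Continuous.momentField {u : E → ℂ} (hu : Continuous u) : Continuous (momentField u) :=
  (ContinuousLinearMap.smulRightL ℝ E ℂ).continuous₂.comp₂ (innerSL ℝ).continuous hu

theorem memLp_two_momentField [MeasurableSpace E] [OpensMeasurableSpace E]
    [SecondCountableTopology E] {μ : Measure E} {u : E → ℂ} (hu : Continuous u)
    (hmom : Integrable (fun x => ‖x‖ ^ 2 * ‖u x‖ ^ 2) μ) : MemLp (momentField u) 2 μ := by
  refine (memLp_two_iff_integrable_sq_norm hu.momentField.aestronglyMeasurable).2 ?_
  simpa only [norm_momentField, mul_pow] using hmom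

end MomentField

section SelfSimilar

variable {N : ℕ} {a t : ℝ} {u : EuclideanSpace ℝ (Fin N) → ℂ}

/-- `selfSimilar N a 1 t x` is the amplitude-and-phase prefactor of `φ(t, x)`. -/
theorem hasFDerivAt_selfSimilar (hdiff : Differentiable ℝ u) (ht : 1 - a * t ≠ 0)
    (x : EuclideanSpace ℝ (Fin N)) :
    HasFDerivAt (selfSimilar N a u t)
      (selfSimilar N a 1 t x • (1 - a * t)⁻¹ •
        (fderiv ℝ u ((1 - a * t)⁻¹ • x) -
          (Complex.I * (a * (1 - a * t) / 2 : ℝ)) • momentField u ((1 - a * t)⁻¹ • x))) x := by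
  set l := 1 - a * t
  have hsq : HasFDerivAt (fun x : EuclideanSpace ℝ (Fin N) => ((‖x‖ ^ 2 : ℝ) : ℂ))
      (Complex.ofRealCLM.comp (2 • innerSL ℝ x)) x :=
    Complex.ofRealCLM.hasFDerivAt.comp x
      (by simpa using (hasFDerivAt_id x).norm_sq : HasFDerivAt (fun x => ‖x‖ ^ 2) _ x)
  have hchirp :=
    ((hsq.const_mul (-Complex.I * (a : ℂ))).mul_const ((4 * (l : ℂ))⁻¹)).cexp
  have hdil : HasFDerivAt (fun x => u (l⁻¹ • x))
      ((fderiv ℝ u (l⁻¹ • x)).comp (l⁻¹ • ContinuousLinearMap.id ℝ _)) x :=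
    (hdiff _).hasFDerivAt.comp x ((hasFDerivAt_id x).const_smul l⁻¹)
  refine (((hchirp.const_mul _).mul_const _).mul hdil).congr_fderiv ?_
  ext v
  have hlC : (1 - a * t : ℂ) ≠ 0 := mod_cast ht
  simp only [selfSimilar, momentField, l, Pi.one_apply, mul_one, neg_mul, mul_neg, mul_inv_rev,
    Complex.ofReal_pow, Complex.ofReal_sub, Complex.ofReal_one, Complex.ofReal_mul,
    Complex.ofReal_div, Complex.ofReal_inv, Complex.ofReal_ofNat, Complex.ofRealCLM_apply,
    Complex.real_smul, ContinuousLinearMap.comp_smulₛₗ, map_inv₀, ringHom_apply,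
    ContinuousLinearMap.comp_id, ContinuousLinearMap.comp_smul, add_apply,
    smul_apply, sub_apply, smul_eq_mul, map_smul,
    ContinuousLinearMap.comp_apply, coe_innerSL_apply, nsmul_eq_mul, Nat.cast_ofNat,
    ContinuousLinearMap.smulRight_apply]
  field_simp
  ring

theorem norm_selfSimilar_one (ht : 0 < 1 - a * t) (x : EuclideanSpace ℝ (Fin N)) :
    ‖selfSimilar N a 1 t x‖ = (1 - a * t) ^ (-(N : ℝ) / 2) := by
  simp [selfSimilar, Complex.norm_exp, abs_of_pos (Real.rpow_pos_of_pos ht _), Complex.div_re,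
    Complex.div_im, Complex.normSq, -Complex.ofReal_pow]

theorem eLpNorm_fderiv_selfSimilar (hdiff : Differentiable ℝ u) (ht : 0 < 1 - a * t) :
    eLpNorm (fun x => fderiv ℝ (selfSimilar N a u t) x) 2 volume =
      ENNReal.ofReal (1 - a * t)⁻¹ * eLpNorm (fun y => fderiv ℝ u y -
        (Complex.I * (a * (1 - a * t) / 2 : ℝ)) • momentField u y) 2 volume := by
  set l := 1 - a * t
  set G := fun y => fderiv ℝ u y - (Complex.I * (a * l / 2 : ℝ)) • momentField u y
  calc eLpNorm (fun x => fderiv ℝ (selfSimilar N a u t) x) 2 volume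
      = eLpNorm (fun x => l⁻¹ • l ^ (-(N : ℝ) / 2) • G (l⁻¹ • x)) 2 volume := by
        refine eLpNorm_congr_norm_ae (ae_of_all _ fun x => ?_)
        rw [(hasFDerivAt_selfSimilar hdiff ht.ne' x).fderiv, norm_smul, norm_selfSimilar_one ht,
          norm_smul, norm_smul, norm_smul, Real.norm_of_nonneg (by positivity),
          Real.norm_of_nonneg (by positivity)]
        ring
    _ = ENNReal.ofReal l⁻¹ * eLpNorm G 2 volume := by
        refine (eLpNorm_const_smul l⁻¹ (fun x => l ^ (-(N : ℝ) / 2) • G (l⁻¹ • x)) 2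
          volume).trans ?_
        rw [Real.enorm_eq_ofReal (by positivity)]
        simpa using congrArg (ENNReal.ofReal l⁻¹ * ·) (eLpNorm_two_rescale volume G ht)

end SelfSimilar

theorem tendsto_one_sub_mul_nhdsLT_inv {a : ℝ} (ha : 0 < a) :
    Tendsto (fun t => 1 - a * t) (𝓝[<] (1 / a)) (𝓝[>] 0) := by
  refine tendsto_nhdsWithin_iff.2 ⟨?_, eventually_nhdsWithin_of_forall fun t ht => ?_⟩
  · have h : Continuous fun t => 1 - a * t := by fun_prop
    simpa [mul_inv_cancel₀ ha.ne'] using (h.tendsto (1 / a)).mono_left nhdsWithin_le_nhds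
  · have := (lt_div_iff₀' ha).1 ht
    simp only [mem_Ioi]
    linarith

theorem tendsto_mul_eLpNorm_fderiv_selfSimilar {N : ℕ} {a : ℝ} (ha : 0 < a)
    {u : EuclideanSpace ℝ (Fin N) → ℂ} (hdiff : Differentiable ℝ u)
    (hgrad : MemLp (fun x => fderiv ℝ u x) 2 volume)
    (hmom : Integrable (fun x => ‖x‖ ^ 2 * ‖u x‖ ^ 2) volume) :
    Tendsto (fun t => (1 - a * t) *
        (eLpNorm (fun x => fderiv ℝ (selfSimilar N a u t) x) 2 volume).toReal) (𝓝[<] (1 / a))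
      (𝓝 (eLpNorm (fun x => fderiv ℝ u x) 2 volume).toReal) := by
  have hl := tendsto_nhdsWithin_iff.1 (tendsto_one_sub_mul_nhdsLT_inv ha)
  have hcoef : Tendsto (fun t => Complex.I * ((a * (1 - a * t) / 2 : ℝ) : ℂ)) (𝓝[<] (1 / a))
      (𝓝 0) := by
    have hcont : Continuous fun l : ℝ => Complex.I * ((a * l / 2 : ℝ) : ℂ) := by fun_prop
    have h : Tendsto (fun l : ℝ => Complex.I * ((a * l / 2 : ℝ) : ℂ)) (𝓝 0) (𝓝 0) := by
      simpa using hcont.tendsto 0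
    exact h.comp hl.1
  refine ((tendsto_toReal_eLpNorm_sub_smul hgrad
    (memLp_two_momentField hdiff.continuous hmom)).comp hcoef).congr' ?_
  filter_upwards [hl.2] with t (ht : 0 < 1 - a * t)
  rw [Function.comp_apply, eLpNorm_fderiv_selfSimilar hdiff ht, ENNReal.toReal_mul,
    ENNReal.toReal_ofReal (inv_pos.2 ht).le, mul_inv_cancel_left₀ ht.ne']
  rfl

theorem stmt14_general (N : ℕ) (a : ℝ) (ha : 0 < a)
    (u : EuclideanSpace ℝ (Fin N) → ℂ)
    (hdiff : Differentiable ℝ u)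
    (hgradmem : MemLp (fun x => fderiv ℝ u x) 2
      (volume : Measure (EuclideanSpace ℝ (Fin N))))
    (hgrad0 : eLpNorm (fun x => fderiv ℝ u x) 2
      (volume : Measure (EuclideanSpace ℝ (Fin N))) ≠ 0)
    (hmom : Integrable (fun x : EuclideanSpace ℝ (Fin N) => ‖x‖ ^ 2 * ‖u x‖ ^ 2) volume) :
    Tendsto
        (fun t => (1 - a * t) *
          (eLpNorm (fun x => fderiv ℝ (selfSimilar N a u t) x) 2
            (volume : Measure (EuclideanSpace ℝ (Fin N)))).toReal)
        (nhdsWithin (1 / a) (Iio (1 / a)))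
        (nhds (eLpNorm (fun x => fderiv ℝ u x) 2
          (volume : Measure (EuclideanSpace ℝ (Fin N)))).toReal) ∧
      Tendsto
        (fun t => (eLpNorm (fun x => fderiv ℝ (selfSimilar N a u t) x) 2
          (volume : Measure (EuclideanSpace ℝ (Fin N)))).toReal)
        (nhdsWithin (1 / a) (Iio (1 / a))) atTop := by
  have hscaled := tendsto_mul_eLpNorm_fderiv_selfSimilar ha hdiff hgradmem hmom
  refine ⟨hscaled, ?_⟩
  have hl := tendsto_one_sub_mul_nhdsLT_inv ha
  refine ((tendsto_inv_nhdsGT_zero.comp hl).atTop_mul_pos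
    (ENNReal.toReal_pos hgrad0 hgradmem.2.ne) hscaled).congr' ?_
  filter_upwards [(tendsto_nhdsWithin_iff.1 hl).2] with t (ht : 0 < 1 - a * t)
  exact inv_mul_cancel_left₀ ht.ne' _

/-- `(1−at)‖∇φ(t)‖₂ → ‖∇u‖₂` as `t ↑ 1/a`, and in particular
`‖∇φ(t)‖₂ → ∞` as `t ↑ 1/a` (assuming `∇u ≠ 0` and `x u ∈ L²`). -/
theorem stmt14 (N : ℕ) (hN : 1 ≤ N) (a : ℝ) (ha : 0 < a)
    (u : EuclideanSpace ℝ (Fin N) → ℂ) (hu0 : u ≠ 0)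
    (hdiff : Differentiable ℝ u)
    (hmem : MemLp u 2 (volume : Measure (EuclideanSpace ℝ (Fin N))))
    (hgradmem : MemLp (fun x => fderiv ℝ u x) 2
      (volume : Measure (EuclideanSpace ℝ (Fin N))))
    (hgrad0 : eLpNorm (fun x => fderiv ℝ u x) 2
      (volume : Measure (EuclideanSpace ℝ (Fin N))) ≠ 0)
    (hmom : Integrable (fun x : EuclideanSpace ℝ (Fin N) => ‖x‖ ^ 2 * ‖u x‖ ^ 2) volume) :
    Tendsto
        (fun t => (1 - a * t) *
          (eLpNorm (fun x => fderiv ℝ (selfSimilar N a u t) x) 2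
            (volume : Measure (EuclideanSpace ℝ (Fin N)))).toReal)
        (nhdsWithin (1 / a) (Iio (1 / a)))
        (nhds (eLpNorm (fun x => fderiv ℝ u x) 2
          (volume : Measure (EuclideanSpace ℝ (Fin N)))).toReal) ∧
      Tendsto
        (fun t => (eLpNorm (fun x => fderiv ℝ (selfSimilar N a u t) x) 2
          (volume : Measure (EuclideanSpace ℝ (Fin N)))).toReal)
        (nhdsWithin (1 / a) (Iio (1 / a))) atTop :=
  stmt14_general N a ha u hdiff hgradmem hgrad0 hmom
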